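/- arXiv:1505.07619 — 8 statements merged into one kernel-verified Lean document; each statement's English description precedes it below -/
import Mathlib

section
/- Let n ≥ 1 and r ≥ 1, and let x_1, …, x_r be trace-zero n×n complex matrices. The following are equivalent: (i) there exists an invertible matrix g ∈ GL_n(ℂ) such that g·x_i·g⁻¹ is strictly upper triangular for every i = 1, …, r; (ii) for every function f : {1,…,n} → {1,…,r}, the product x_{f(1)}·x_{f(2)}·⋯·x_{f(n)} is the zero matrix. -/
/-!
If `g xᵢ g⁻¹` is strictly upper triangular for all `i`, each `xᵢ` moves the flag of `g` one step
down, so every product of `n` of them vanishes. Conversely, if all such products vanish, then for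
every proper subspace `H` some vector outside `H` is mapped into `H` by every `xᵢ`: otherwise
there would be words of every length in the `xᵢ` whose product does not map `ℂⁿ` into `H`.
Adding such vectors one at a time builds a basis in which every `xᵢ` is strictly upper
triangular.
-/

open Module Submodule Set

namespace Matrix

variable {n : ℕ} {R : Type*}

def IsStrictUpperTriangular [Zero R] (A : Matrix (Fin n) (Fin n) R) : Prop :=
  ∀ j k, k ≤ j → A j k = 0

variable [Semiring R]

theorem list_prod_apply_eq_zero_of_isStrictUpperTriangular {l : List (Matrix (Fin n) (Fin n) R)}
    (hl : ∀ A ∈ l, A.IsStrictUpperTriangular) {j k : Fin n} (hjk : (k : ℕ) < j + l.length) :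
    l.prod j k = 0 := by
  induction l generalizing j with
  | nil =>
    have : j ≠ k := by rintro rfl; simp at hjk
    simp [one_apply_ne this]
  | cons A l ih =>
    rw [List.prod_cons, mul_apply]
    refine Finset.sum_eq_zero fun t _ => ?_
    rcases le_or_gt t j with htj | hjt
    · rw [hl A List.mem_cons_self j t htj, zero_mul]
    · rw [ih (fun B hB => hl B (List.mem_cons_of_mem A hB)) ?_, mul_zero]
      simp only [List.length_cons] at hjk
      omega

theorem list_prod_eq_zero_of_isStrictUpperTriangular {l : List (Matrix (Fin n) (Fin n) R)}
    (hl : ∀ A ∈ l, A.IsStrictUpperTriangular) (hn : n ≤ l.length) : l.prod = 0 := by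
  ext j k
  exact list_prod_apply_eq_zero_of_isStrictUpperTriangular hl (by omega)

end Matrix

theorem Units.list_prod_map_conj {M : Type*} [Monoid M] (u : Mˣ) (l : List M) :
    (l.map fun a => (u : M) * a * ↑u⁻¹).prod = u * l.prod * ↑u⁻¹ := by
  induction l with
  | nil => simp
  | cons a l ih =>
    rw [List.map_cons, List.prod_cons, List.prod_cons, ih]
    simp only [mul_assoc, Units.inv_mul_cancel_left]

section Words

variable {R V ι : Type*} [Semiring R] [AddCommMonoid V] [Module R V] {φ : ι → Module.End R V}
  {m : ℕ}

theorem Submodule.exists_notMem_forall_apply_mem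
    (hφ : ∀ w : Fin m → ι, (List.ofFn fun j => φ (w j)).prod = 0) {H : Submodule R V}
    (hH : H ≠ ⊤) : ∃ v ∉ H, ∀ i, φ i v ∈ H := by
  by_contra! h
  have long_word : ∀ k, ∃ w : Fin k → ι, ∃ u, (List.ofFn fun j => φ (w j)).prod u ∉ H := by
    intro k
    induction k with
    | zero => simpa using SetLike.exists_not_mem_of_ne_top H hH
    | succ k ih =>
      obtain ⟨w, u, hu⟩ := ih
      obtain ⟨i, hi⟩ := h _ hu
      exact ⟨Fin.cons i w, u, by simpa [List.ofFn_succ] using hi⟩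
  obtain ⟨w, u, hu⟩ := long_word m
  exact hu (by simp [hφ w])

end Words

section Triangularization

variable {K V ι : Type*} [DivisionRing K] [AddCommGroup V] [Module K V] {φ : ι → Module.End K V}
  {m : ℕ}

theorem exists_linearIndependent_apply_mem_span_Iio
    (hφ : ∀ w : Fin m → ι, (List.ofFn fun j => φ (w j)).prod = 0) {k : ℕ}
    (hk : k ≤ finrank K V) :
    ∃ b : Fin k → V, LinearIndependent K b ∧ ∀ i j, φ i (b j) ∈ span K (b '' Iio j) := by
  induction k with
  | zero => exact ⟨Fin.elim0, linearIndependent_empty_type, fun _ j => j.elim0⟩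
  | succ k ih =>
    obtain ⟨b, hb, hbφ⟩ := ih (by omega)
    have hspan : span K (range b) ≠ ⊤ := by
      intro htop
      have := finrank_span_eq_card hb
      rw [htop, finrank_top, Fintype.card_fin] at this
      omega
    obtain ⟨v, hv, hvφ⟩ := exists_notMem_forall_apply_mem hφ hspan
    refine ⟨Fin.snoc b v, linearIndependent_finSnoc.mpr ⟨hb, hv⟩, fun i j => ?_⟩
    induction j using Fin.lastCases with
    | last =>
      have : Fin.snoc b v '' Iio (Fin.last k) = range b := by
        ext; simp [Fin.exists_fin_succ', Fin.castSucc_lt_last]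
      simpa [this] using hvφ i
    | cast j =>
      rw [← Fin.image_castSucc_Iio, image_image]
      simpa using hbφ i j

theorem exists_basis_apply_mem_span_Iio [FiniteDimensional K V]
    (hφ : ∀ w : Fin m → ι, (List.ofFn fun j => φ (w j)).prod = 0) {n : ℕ}
    (hn : finrank K V = n) :
    ∃ b : Basis (Fin n) K V, ∀ i j, φ i (b j) ∈ span K (b '' Iio j) := by
  subst hn
  obtain ⟨b, hb, hbφ⟩ := exists_linearIndependent_apply_mem_span_Iio hφ le_rfl
  exact ⟨basisOfLinearIndependentOfCardEqFinrank' b hb (Fintype.card_fin _), by simpa using hbφ⟩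

end Triangularization

theorem Module.Basis.isStrictUpperTriangular_toMatrix {R V : Type*} [CommRing R] [AddCommGroup V]
    [Module R V] {n : ℕ} (b : Basis (Fin n) R V) {f : Module.End R V}
    (hf : ∀ j, f (b j) ∈ span R (b '' Iio j)) :
    (LinearMap.toMatrix b b f).IsStrictUpperTriangular := by
  intro j k hkj
  rw [LinearMap.toMatrix_apply, ← Finsupp.notMem_support_iff]
  exact fun hj => (b.mem_span_image.mp (hf k) hj).not_ge hkj

theorem nullcone_iff_products_vanish_general (n r : ℕ)
    (x : Fin r → Matrix (Fin n) (Fin n) ℂ) :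
    (∃ g : GL (Fin n) ℂ, ∀ i : Fin r, ∀ j k : Fin n, k ≤ j →
        ((g : Matrix (Fin n) (Fin n) ℂ) * x i *
          ((g⁻¹ : GL (Fin n) ℂ) : Matrix (Fin n) (Fin n) ℂ)) j k = 0) ↔
      (∀ f : Fin n → Fin r, (List.ofFn fun j : Fin n => x (f j)).prod = 0) := by
  constructor
  · rintro ⟨g, hg⟩ f
    have hprod := Matrix.list_prod_eq_zero_of_isStrictUpperTriangular
      (l := (List.ofFn fun j => x (f j)).map fun a =>
        (g : Matrix (Fin n) (Fin n) ℂ) * a * ((g⁻¹ : GL (Fin n) ℂ) : Matrix (Fin n) (Fin n) ℂ))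
      (by
        simp only [List.map_ofFn, List.mem_ofFn]
        rintro _ ⟨j, rfl⟩
        exact hg (f j))
      (by simp)
    rwa [Units.list_prod_map_conj, Units.mul_left_eq_zero, Units.mul_right_eq_zero] at hprod
  · intro hprod
    obtain ⟨b, hb⟩ := exists_basis_apply_mem_span_Iio (φ := fun i => Matrix.toLinAlgEquiv' (x i))
      (fun f => by
        have := congrArg Matrix.toLinAlgEquiv' (hprod f)
        rwa [map_list_prod, List.map_ofFn, map_zero] at this)
      (Module.finrank_fin_fun ℂ)
    let e := Pi.basisFun ℂ (Fin n)
    refine ⟨⟨b.toMatrix e, e.toMatrix b, b.toMatrix_mul_toMatrix_flip e,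
      e.toMatrix_mul_toMatrix_flip b⟩, fun i => ?_⟩
    have htri := b.isStrictUpperTriangular_toMatrix (hb i)
    have hxe : LinearMap.toMatrix e e (Matrix.toLinAlgEquiv' (x i)) = x i :=
      LinearMap.toMatrixAlgEquiv'_toLinAlgEquiv' (x i)
    rwa [← basis_toMatrix_mul_linearMap_toMatrix_mul_basis_toMatrix b e b e, hxe] at htri

/-- For trace-zero matrices x_1, …, x_r, the tuple lies in the null-cone 𝒜_r for sl_n
(i.e. is simultaneously conjugate into the strictly upper triangular matrices) iff
every product of n of the x_i's vanishes. -/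
theorem nullcone_iff_products_vanish (n r : ℕ) (hn : 1 ≤ n) (hr : 1 ≤ r)
    (x : Fin r → Matrix (Fin n) (Fin n) ℂ) (hx : ∀ i, (x i).trace = 0) :
    (∃ g : GL (Fin n) ℂ, ∀ i : Fin r, ∀ j k : Fin n, k ≤ j →
        ((g : Matrix (Fin n) (Fin n) ℂ) * x i *
          ((g⁻¹ : GL (Fin n) ℂ) : Matrix (Fin n) (Fin n) ℂ)) j k = 0) ↔
      (∀ f : Fin n → Fin r, (List.ofFn fun j : Fin n => x (f j)).prod = 0) :=
  nullcone_iff_products_vanish_general n r x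
end

section
/- Let n ≥ 2, let S be a set of pairs (i,j) with 1 ≤ i < j ≤ n, and set χ = −Σ_{(i,j)∈S} (e_i − e_j), a sum of distinct negative roots of A_{n−1}. If w ∈ S_n is such that w·χ = w(χ+ρ) − ρ is dominant, then w·χ = 0. -/
/-- ρ = (n−1, n−2, …, 1, 0) for type A_{n−1} realized in ℤ^n. -/
def weylRho (n : ℕ) : Fin n → ℤ := fun i => (n : ℤ) - 1 - (i : ℕ)

/-- The action of `w ∈ S_n` on weights: `w(λ)_i = λ_{w⁻¹(i)}`. -/
def wAct {n : ℕ} (w : Equiv.Perm (Fin n)) (lam : Fin n → ℤ) : Fin n → ℤ :=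
  fun i => lam (w⁻¹ i)

/-- The dot action `w·λ = w(λ+ρ) − ρ`. -/
def dotAct {n : ℕ} (w : Equiv.Perm (Fin n)) (lam : Fin n → ℤ) : Fin n → ℤ :=
  fun i => lam (w⁻¹ i) + weylRho n (w⁻¹ i) - weylRho n i

/-- `λ` is dominant iff `λ_1 ≥ λ_2 ≥ ⋯ ≥ λ_n`. -/
def IsDominant {n : ℕ} (lam : Fin n → ℤ) : Prop :=
  ∀ i j : Fin n, i ≤ j → lam j ≤ lam i

/-- The root `e_i − e_j`. -/
def posRoot {n : ℕ} (i j : Fin n) : Fin n → ℤ :=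
  fun k => (if k = i then 1 else 0) - (if k = j then 1 else 0)

/-- Positive roots of A_{n−1}: `e_i − e_j` with `i < j`. -/
def IsPosRoot {n : ℕ} (x : Fin n → ℤ) : Prop :=
  ∃ i j : Fin n, i < j ∧ x = posRoot i j

/-- Negative roots of A_{n−1}. -/
def IsNegRoot {n : ℕ} (x : Fin n → ℤ) : Prop :=
  ∃ i j : Fin n, i < j ∧ x = -(posRoot i j)

/-- The length ℓ(w): the number of positive roots sent to negative roots by `w`,
i.e. the number of inversions of `w`. -/
def weylLen {n : ℕ} (w : Equiv.Perm (Fin n)) : ℕ :=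
  (Finset.univ.filter (fun p : Fin n × Fin n => p.1 < p.2 ∧ w p.2 < w p.1)).card

/-!
Each coordinate of `χ + ρ` lies in `[0, n - 1]`: at `k`, the roots `e_k - e_j` in the sum
(with `j > k`) number at most `n - 1 - k` and the roots `e_i - e_k` (with `i < k`) at most `k`.
Permuting by `w` keeps this, while dominance of `w·χ` means that `w(χ + ρ)` drops by at least
`j - i` from position `i` to `j`. Comparing with the first and last coordinates forces
`w(χ + ρ) = ρ`, i.e. `w·χ = 0`.
-/

open Finset

lemma card_filter_fst_eq_le_card_Ioi {α : Type*} [Preorder α] [DecidableEq α]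
    [LocallyFiniteOrderTop α] {S : Finset (α × α)} (hS : ∀ p ∈ S, p.1 < p.2) (k : α) :
    #(S.filter (fun p => p.1 = k)) ≤ #(Ioi k) := by
  refine card_le_card_of_injOn Prod.snd (fun p hp => ?_) (fun p hp q hq hpq => ?_)
  · simp only [coe_filter, Set.mem_ofPred_eq] at hp
    simpa [← hp.2] using hS p hp.1
  · simp only [coe_filter, Set.mem_ofPred_eq] at hp hq
    exact Prod.ext (hp.2.trans hq.2.symm) hpq

lemma card_filter_snd_eq_le_card_Iio {α : Type*} [Preorder α] [DecidableEq α]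
    [LocallyFiniteOrderBot α] {S : Finset (α × α)} (hS : ∀ p ∈ S, p.1 < p.2) (k : α) :
    #(S.filter (fun p => p.2 = k)) ≤ #(Iio k) := by
  refine card_le_card_of_injOn Prod.fst (fun p hp => ?_) (fun p hp q hq hpq => ?_)
  · simp only [coe_filter, Set.mem_ofPred_eq] at hp
    simpa [← hp.2] using hS p hp.1
  · simp only [coe_filter, Set.mem_ofPred_eq] at hp hq
    exact Prod.ext hpq (hp.2.trans hq.2.symm)

lemma sum_posRoot_apply {n : ℕ} (S : Finset (Fin n × Fin n)) (k : Fin n) :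
    (∑ p ∈ S, posRoot p.1 p.2) k =
      #(S.filter (fun p => p.1 = k)) - #(S.filter (fun p => p.2 = k)) := by
  simp only [Finset.sum_apply, posRoot, Finset.sum_sub_distrib, Finset.sum_boole, eq_comm (a := k)]

lemma neg_sum_posRoot_add_weylRho_mem_Icc {n : ℕ} {S : Finset (Fin n × Fin n)}
    (hS : ∀ p ∈ S, p.1 < p.2) (k : Fin n) :
    (-(∑ p ∈ S, posRoot p.1 p.2) + weylRho n) k ∈ Set.Icc 0 ((n : ℤ) - 1) := by
  have hfst := card_filter_fst_eq_le_card_Ioi hS k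
  have hsnd := card_filter_snd_eq_le_card_Iio hS k
  rw [Fin.card_Ioi] at hfst
  rw [Fin.card_Iio] at hsnd
  simp only [Pi.add_apply, Pi.neg_apply, sum_posRoot_apply, weylRho, Set.mem_Icc]
  omega

lemma dotAct_add_weylRho {n : ℕ} (w : Equiv.Perm (Fin n)) (lam : Fin n → ℤ) :
    dotAct w lam + weylRho n = wAct w (lam + weylRho n) := by
  ext i
  simp [dotAct, wAct]

lemma eq_weylRho_of_isDominant_sub {n : ℕ} {f : Fin n → ℤ}
    (hf : ∀ k, f k ∈ Set.Icc 0 ((n : ℤ) - 1)) (hdom : IsDominant (f - weylRho n)) :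
    f = weylRho n := by
  ext k
  obtain ⟨m, rfl⟩ : ∃ m, n = m + 1 := ⟨n - 1, by have := k.pos; omega⟩
  have hfirst := hdom 0 k (Fin.zero_le k)
  have hlast := hdom k (Fin.last m) (Fin.le_last k)
  have hfirst_le := (hf 0).2
  have hlast_nonneg := (hf (Fin.last m)).1
  simp only [Pi.sub_apply, weylRho, Fin.val_zero, Fin.val_last] at hfirst hlast ⊢
  push_cast at *
  have := k.isLt
  omega

theorem dotAct_eq_zero_of_isDominant {n : ℕ} (w : Equiv.Perm (Fin n)) {lam : Fin n → ℤ}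
    (hlam : ∀ k, (lam + weylRho n) k ∈ Set.Icc 0 ((n : ℤ) - 1))
    (hdom : IsDominant (dotAct w lam)) :
    dotAct w lam = 0 := by
  have hρ : wAct w (lam + weylRho n) = weylRho n := by
    refine eq_weylRho_of_isDominant_sub (fun k => hlam (w⁻¹ k)) ?_
    rwa [← dotAct_add_weylRho, add_sub_cancel_right]
  simpa [hρ] using dotAct_add_weylRho w lam

theorem dot_of_sum_distinct_neg_roots_dominant_eq_zero_general (n : ℕ)
    (S : Finset (Fin n × Fin n)) (hS : ∀ p ∈ S, p.1 < p.2)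
    (w : Equiv.Perm (Fin n))
    (hdom : IsDominant (dotAct w (-(∑ p ∈ S, posRoot p.1 p.2)))) :
    dotAct w (-(∑ p ∈ S, posRoot p.1 p.2)) = 0 :=
  dotAct_eq_zero_of_isDominant w (neg_sum_posRoot_add_weylRho_mem_Icc hS) hdom

/-- If χ is a sum of distinct negative roots of A_{n−1} and w·χ is dominant,
then w·χ = 0. -/
theorem dot_of_sum_distinct_neg_roots_dominant_eq_zero (n : ℕ) (hn : 2 ≤ n)
    (S : Finset (Fin n × Fin n)) (hS : ∀ p ∈ S, p.1 < p.2)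
    (w : Equiv.Perm (Fin n))
    (hdom : IsDominant (dotAct w (-(∑ p ∈ S, posRoot p.1 p.2)))) :
    dotAct w (-(∑ p ∈ S, posRoot p.1 p.2)) = 0 :=
  dot_of_sum_distinct_neg_roots_dominant_eq_zero_general n S hS w hdom
end

section
/- Let n ≥ 3 and let α, β be positive roots of A_{n−1} (not necessarily distinct). If w ∈ S_n is such that w·(−α−β) = w(−α−β+ρ) − ρ is dominant, then w·(−α−β) = 0. -/
/-!
Put `μ = λ + ρ` with `λ = -α - β`, so that `w·λ = w(μ) - ρ`. Since `ρ` drops by exactly one at each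
step, dominance of `w(μ) - ρ` forces `w(μ)` to be strictly decreasing, so the entries of `μ` are
distinct. The entry `μ_m = n - 1 - m - α_m - β_m` can leave `[0, n - 1]` only for
`α = β = e_1 - e_2` or `α = β = e_{n-1} - e_n`, and then `μ` has a repeated entry (at positions
`1, 3`, resp. `n - 2, n`; this needs `n ≥ 3`). Hence `w(μ) - ρ` is antitone with first entry
`≤ 0` and last entry `≥ 0`, so it vanishes.
-/

open Function

section

variable {n : ℕ}

lemma dotAct_eq_wAct_sub (w : Equiv.Perm (Fin n)) (lam : Fin n → ℤ) :
    dotAct w lam = wAct w (lam + weylRho n) - weylRho n :=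
  rfl

lemma weylRho_strictAnti : StrictAnti (weylRho n) := by
  intro i j hij
  simp only [weylRho]
  omega

lemma strictAnti_of_isDominant_sub_weylRho {g : Fin n → ℤ} (hdom : IsDominant (g - weylRho n)) :
    StrictAnti g := by
  intro i j hij
  have hle := hdom i j hij.le
  have hρ := weylRho_strictAnti hij
  simp only [Pi.sub_apply] at hle
  omega

lemma eq_weylRho_of_isDominant_sub_weylRho {g : Fin n → ℤ} (hdom : IsDominant (g - weylRho n))
    (hg : ∀ i, 0 ≤ g i ∧ g i ≤ n - 1) : g = weylRho n := by
  funext i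
  have hn := i.pos
  have hfirst := hdom ⟨0, by omega⟩ i (Fin.mk_le_of_le_val (Nat.zero_le _))
  have hlast := hdom i ⟨n - 1, by omega⟩ (by change (i : ℕ) ≤ n - 1; omega)
  have h0 := hg ⟨0, by omega⟩
  have h1 := hg ⟨n - 1, by omega⟩
  simp only [Pi.sub_apply, weylRho] at hfirst hlast ⊢
  omega

lemma posRoot_apply_cases {i j : Fin n} (hij : i < j) (m : Fin n) :
    (m = i ∧ posRoot i j m = 1) ∨ (m = j ∧ posRoot i j m = -1) ∨
      (m ≠ i ∧ m ≠ j ∧ posRoot i j m = 0) := by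
  unfold posRoot
  split_ifs <;> simp_all

def shiftedNegRootSum (i j k l : Fin n) : Fin n → ℤ :=
  -posRoot i j - posRoot k l + weylRho n

variable {i j k l : Fin n}

lemma shiftedNegRootSum_apply (m : Fin n) :
    shiftedNegRootSum i j k l m = n - 1 - m - posRoot i j m - posRoot k l m := by
  simp only [shiftedNegRootSum, weylRho, Pi.add_apply, Pi.sub_apply, Pi.neg_apply]
  ring

lemma shiftedNegRootSum_le (hn : 3 ≤ n) (hij : i < j) (hkl : k < l)
    (hinj : Injective (shiftedNegRootSum i j k l)) (m : Fin n) :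
    shiftedNegRootSum i j k l m ≤ n - 1 := by
  by_contra! hm
  rw [shiftedNegRootSum_apply] at hm
  have hroots : (i : ℕ) = 0 ∧ (j : ℕ) = 1 ∧ (k : ℕ) = 0 ∧ (l : ℕ) = 1 := by
    rcases posRoot_apply_cases hij m with ⟨hi, h₁⟩ | ⟨hj, h₁⟩ | ⟨-, -, h₁⟩ <;>
      rcases posRoot_apply_cases hkl m with ⟨hk, h₂⟩ | ⟨hl, h₂⟩ | ⟨-, -, h₂⟩ <;> omega
  have hcollide :
      shiftedNegRootSum i j k l ⟨0, by omega⟩ = shiftedNegRootSum i j k l ⟨2, by omega⟩ := by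
    simp only [shiftedNegRootSum_apply, posRoot, Fin.ext_iff, hroots]
    grind
  exact absurd (Fin.mk.inj_iff.mp (hinj hcollide)) (by omega)

lemma shiftedNegRootSum_nonneg (hn : 3 ≤ n) (hij : i < j) (hkl : k < l)
    (hinj : Injective (shiftedNegRootSum i j k l)) (m : Fin n) :
    0 ≤ shiftedNegRootSum i j k l m := by
  by_contra! hm
  rw [shiftedNegRootSum_apply] at hm
  have hroots : (i : ℕ) = n - 2 ∧ (j : ℕ) = n - 1 ∧ (k : ℕ) = n - 2 ∧ (l : ℕ) = n - 1 := by
    rcases posRoot_apply_cases hij m with ⟨hi, h₁⟩ | ⟨hj, h₁⟩ | ⟨-, -, h₁⟩ <;>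
      rcases posRoot_apply_cases hkl m with ⟨hk, h₂⟩ | ⟨hl, h₂⟩ | ⟨-, -, h₂⟩ <;> omega
  have hcollide : shiftedNegRootSum i j k l ⟨n - 1, by omega⟩ =
      shiftedNegRootSum i j k l ⟨n - 3, by omega⟩ := by
    simp only [shiftedNegRootSum_apply, posRoot, Fin.ext_iff, hroots]
    grind
  exact absurd (Fin.mk.inj_iff.mp (hinj hcollide)) (by omega)

end

/-- For n ≥ 3 and positive roots α, β of A_{n−1} (not necessarily distinct),
if w·(−α−β) is dominant then it is zero. -/
theorem dot_neg_two_roots_dominant_eq_zero (n : ℕ) (hn : 3 ≤ n) (α β : Fin n → ℤ)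
    (hα : IsPosRoot α) (hβ : IsPosRoot β) (w : Equiv.Perm (Fin n))
    (hdom : IsDominant (dotAct w (-α - β))) :
    dotAct w (-α - β) = 0 := by
  obtain ⟨i, j, hij, rfl⟩ := hα
  obtain ⟨k, l, hkl, rfl⟩ := hβ
  set μ := shiftedNegRootSum i j k l
  have hdot : dotAct w (-posRoot i j - posRoot k l) = wAct w μ - weylRho n :=
    dotAct_eq_wAct_sub w _
  rw [hdot] at hdom ⊢
  have hinj : Injective μ := fun x y hxy =>
    w.injective <| (strictAnti_of_isDominant_sub_weylRho hdom).injective <| by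
      simpa [wAct] using hxy
  have hbounds (m : Fin n) : 0 ≤ wAct w μ m ∧ wAct w μ m ≤ n - 1 :=
    ⟨shiftedNegRootSum_nonneg hn hij hkl hinj _, shiftedNegRootSum_le hn hij hkl hinj _⟩
  rw [eq_weylRho_of_isDominant_sub_weylRho hdom hbounds, sub_self]
end

section
/- Let n ≥ 3, let α, β be distinct positive roots of A_{n−1}, and let w ∈ S_n be such that w·(−2α−β) = w(−2α−β+ρ) − ρ is dominant and nonzero. Then n = 3, ℓ(w) = 2, w·(−2α−β) = α_1 + α_2 = (1,0,−1), and 2α+β ∈ {3α_1+α_2, α_1+3α_2}, i.e. the pair (α, β) is (α_1, α_1+α_2) or (α_2, α_1+α_2). -/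
instance {n : ℕ} (lam : Fin n → ℤ) : Decidable (IsDominant lam) := by
  unfold IsDominant; infer_instance

lemma auxLen : ∀ (a b c d : Fin 3) (w : Equiv.Perm (Fin 3)), a < b → c < d → ¬(a = c ∧ b = d) →
    IsDominant (dotAct w (-(2 • posRoot a b) - posRoot c d)) →
    dotAct w (-(2 • posRoot a b) - posRoot c d) ≠ 0 → weylLen w = 2 := by decide

lemma auxEq : ∀ (a b c d : Fin 3) (w : Equiv.Perm (Fin 3)), a < b → c < d → ¬(a = c ∧ b = d) →
    IsDominant (dotAct w (-(2 • posRoot a b) - posRoot c d)) →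
    dotAct w (-(2 • posRoot a b) - posRoot c d) ≠ 0 →
    dotAct w (-(2 • posRoot a b) - posRoot c d) = posRoot (0 : Fin 3) 2 := by decide

lemma auxCase : ∀ (a b c d : Fin 3) (w : Equiv.Perm (Fin 3)), a < b → c < d → ¬(a = c ∧ b = d) →
    IsDominant (dotAct w (-(2 • posRoot a b) - posRoot c d)) →
    dotAct w (-(2 • posRoot a b) - posRoot c d) ≠ 0 →
    ((a = 0 ∧ b = 1 ∧ c = 0 ∧ d = 2) ∨ (a = 1 ∧ b = 2 ∧ c = 0 ∧ d = 2)) := by decide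

lemma sum_posRoot {n : ℕ} (i j : Fin n) : ∑ k, posRoot i j k = 0 := by
  simp [posRoot, Finset.sum_sub_distrib]

/-- Classification of dominant nonzero dot-translates of −2α−β (α ≠ β positive roots):
this forces n = 3, ℓ(w) = 2, w·(−2α−β) = α₁+α₂, and (α,β) ∈ {(α₁, α₁+α₂), (α₂, α₁+α₂)}. -/
theorem dot_neg_twoalpha_beta_classification (n : ℕ) (hn : 3 ≤ n) (α β : Fin n → ℤ)
    (hα : IsPosRoot α) (hβ : IsPosRoot β) (hne : α ≠ β) (w : Equiv.Perm (Fin n))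
    (hdom : IsDominant (dotAct w (-(2 • α) - β)))
    (hnz : dotAct w (-(2 • α) - β) ≠ 0) :
    n = 3 ∧ weylLen w = 2 ∧
    dotAct w (-(2 • α) - β) = posRoot (⟨0, by omega⟩ : Fin n) (⟨2, by omega⟩ : Fin n) ∧
    ((α = posRoot (⟨0, by omega⟩ : Fin n) (⟨1, by omega⟩ : Fin n) ∧
        β = posRoot (⟨0, by omega⟩ : Fin n) (⟨2, by omega⟩ : Fin n)) ∨
      (α = posRoot (⟨1, by omega⟩ : Fin n) (⟨2, by omega⟩ : Fin n) ∧
        β = posRoot (⟨0, by omega⟩ : Fin n) (⟨2, by omega⟩ : Fin n))) := by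
  obtain ⟨a, b, hab, rfl⟩ := hα
  obtain ⟨c, d, hcd, rfl⟩ := hβ
  have hne' : ¬(a = c ∧ b = d) := by rintro ⟨rfl, rfl⟩; exact hne rfl
  have hsumlam : ∑ i, (-(2 • posRoot a b) - posRoot c d) i = 0 := by
    have hrw : ∀ i, (-(2 • posRoot a b) - posRoot c d) i
        = -((2:ℤ) * posRoot a b i) - posRoot c d i := fun i => by
      simp [nsmul_eq_mul]
    rw [Finset.sum_congr rfl (fun i _ => hrw i), Finset.sum_sub_distrib]
    rw [Finset.sum_neg_distrib, ← Finset.mul_sum, sum_posRoot, sum_posRoot]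
    ring
  have hsum : ∑ i, dotAct w (-(2 • posRoot a b) - posRoot c d) i = 0 := by
    have h1 : ∑ i, ((-(2 • posRoot a b) - posRoot c d) (w⁻¹ i) + weylRho n (w⁻¹ i))
        = ∑ i, ((-(2 • posRoot a b) - posRoot c d) i + weylRho n i) :=
      Equiv.sum_comp w⁻¹ (fun i => (-(2 • posRoot a b) - posRoot c d) i + weylRho n i)
    simp only [dotAct]
    calc ∑ i, ((-(2 • posRoot a b) - posRoot c d) (w⁻¹ i) + weylRho n (w⁻¹ i) - weylRho n i)
        = (∑ i, ((-(2 • posRoot a b) - posRoot c d) (w⁻¹ i) + weylRho n (w⁻¹ i)))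
          - ∑ i, weylRho n i := by rw [Finset.sum_sub_distrib]
      _ = (∑ i, ((-(2 • posRoot a b) - posRoot c d) i + weylRho n i)) - ∑ i, weylRho n i := by
          rw [h1]
      _ = ∑ i, (-(2 • posRoot a b) - posRoot c d) i := by rw [Finset.sum_add_distrib]; ring
      _ = 0 := hsumlam
  set μ := dotAct w (-(2 • posRoot a b) - posRoot c d) with hμ
  have i0lt : 0 < n := by omega
  have iNlt : n - 1 < n := by omega
  have h1 : 1 ≤ μ ⟨0, i0lt⟩ := by
    by_contra h
    push_neg at h
    have hall : ∀ j, μ j ≤ 0 := fun j =>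
      le_trans (hdom ⟨0, i0lt⟩ j (by simp [Fin.le_def])) (by omega)
    apply hnz
    funext j
    have h0 : ∑ i, -μ i = 0 := by rw [Finset.sum_neg_distrib, hsum]; ring
    have := (Finset.sum_eq_zero_iff_of_nonneg
      (fun i _ => by simpa using hall i)).mp h0 j (Finset.mem_univ j)
    simpa using this
  have h2 : μ ⟨n - 1, iNlt⟩ ≤ -1 := by
    by_contra h
    push_neg at h
    have hall : ∀ j, 0 ≤ μ j := fun j =>
      le_trans (by omega) (hdom j ⟨n - 1, iNlt⟩ (by simp [Fin.le_def]; omega))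
    apply hnz
    funext j
    exact (Finset.sum_eq_zero_iff_of_nonneg (fun i _ => hall i)).mp hsum j (Finset.mem_univ j)
  have e1 := h1
  have e2 := h2
  simp only [hμ, dotAct, weylRho, Pi.sub_apply, Pi.neg_apply, Pi.smul_apply, nsmul_eq_mul,
    Nat.cast_ofNat, Pi.mul_apply, Pi.natCast_apply, Pi.ofNat_apply, posRoot, Fin.ext_iff] at e1 e2
  have hp := (w⁻¹ (⟨0, i0lt⟩ : Fin n)).isLt
  have hq := (w⁻¹ (⟨n - 1, iNlt⟩ : Fin n)).isLt
  have hab' : a.val < b.val := hab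
  have hcd' : c.val < d.val := hcd
  have hne'' : ¬(a.val = c.val ∧ b.val = d.val) := by
    rintro ⟨h1', h2'⟩
    exact hne' ⟨Fin.ext h1', Fin.ext h2'⟩
  have hn3 : n = 3 := by
    split_ifs at e1 e2 <;> omega
  subst hn3
  rw [hμ] at hdom hnz
  have hlen := auxLen a b c d w hab hcd hne' hdom hnz
  have heq := auxEq a b c d w hab hcd hne' hdom hnz
  have hcase := auxCase a b c d w hab hcd hne' hdom hnz
  refine ⟨rfl, hlen, heq, ?_⟩
  rcases hcase with ⟨rfl, rfl, rfl, rfl⟩ | ⟨rfl, rfl, rfl, rfl⟩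
  · exact Or.inl ⟨rfl, rfl⟩
  · exact Or.inr ⟨rfl, rfl⟩
end

section
/- Let n ≥ 3 and let α_i = e_i − e_{i+1} be a simple root of A_{n−1}. There exists w ∈ S_n with w·(−3α_i) = w(−3α_i+ρ) − ρ dominant if and only if either n = 3 (with i = 1 or i = 2) or n = 4 and i = 2. Moreover, in these cases: for n = 3, i = 1, w·(−3α_1) = 2α_1+α_2 = (2,−1,−1) with ℓ(w) = 2; for n = 3, i = 2, w·(−3α_2) = α_1+2α_2 = (1,1,−2) with ℓ(w) = 2; for n = 4, i = 2, w·(−3α_2) = α_1+2α_2+α_3 = (1,1,−1,−1) with ℓ(w) = 3. -/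
instance decIsDominant {n : ℕ} (lam : Fin n → ℤ) : Decidable (IsDominant lam) := by
  unfold IsDominant; infer_instance

lemma no_dom {n : ℕ} (lam : Fin n → ℤ) (a b : Fin n) (hab : a ≠ b)
    (h : lam a + weylRho n a = lam b + weylRho n b) (w : Equiv.Perm (Fin n)) :
    ¬ IsDominant (dotAct w lam) := by
  intro D
  have e1 : dotAct w lam (w a) = lam a + weylRho n a - weylRho n (w a) := by
    simp [dotAct]
  have e2 : dotAct w lam (w b) = lam b + weylRho n b - weylRho n (w b) := by
    simp [dotAct]
  have hne : w a ≠ w b := fun h' => hab (w.injective h')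
  have hrho : ∀ k : Fin n, weylRho n k = (n : ℤ) - 1 - (k : ℕ) := fun _ => rfl
  rcases lt_trichotomy (w a) (w b) with hlt | heq | hlt
  · have hd := D (w a) (w b) hlt.le
    rw [e1, e2, hrho (w a), hrho (w b)] at hd
    have hv : ((w a : ℕ) : ℤ) < ((w b : ℕ) : ℤ) := by exact_mod_cast hlt
    omega
  · exact hne heq
  · have hd := D (w b) (w a) hlt.le
    rw [e1, e2, hrho (w a), hrho (w b)] at hd
    have hv : ((w b : ℕ) : ℤ) < ((w a : ℕ) : ℤ) := by exact_mod_cast hlt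
    omega

lemma lam_val {n : ℕ} (p q k : Fin n) :
    (-(3 • posRoot p q)) k = (if k = q then 3 else 0) - (if k = p then 3 else 0) := by
  simp only [Pi.neg_apply, Pi.smul_apply, posRoot, smul_eq_mul]
  split_ifs <;> ring

/-- For a simple root α_i of A_{n−1} (n ≥ 3): some w·(−3α_i) is dominant iff n = 3,
or n = 4 and α_i is the middle simple root; moreover in those cases the dominant
translate and the length of w are as follows:
n = 3, i = 1: w·(−3α₁) = 2α₁+α₂ = (2,−1,−1), ℓ(w) = 2;
n = 3, i = 2: w·(−3α₂) = α₁+2α₂ = (1,1,−2), ℓ(w) = 2;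
n = 4, i = 2: w·(−3α₂) = α₁+2α₂+α₃ = (1,1,−1,−1), ℓ(w) = 3.
(Indices are 0-based below: the simple root is e_i − e_{i+1} for 0 ≤ i ≤ n−2.) -/
theorem dot_neg_three_simple_root_classification (n : ℕ) (hn : 3 ≤ n) (i : ℕ)
    (hi : i + 1 < n) :
    ((∃ w : Equiv.Perm (Fin n),
        IsDominant (dotAct w (-(3 • posRoot (⟨i, by omega⟩ : Fin n) (⟨i + 1, hi⟩ : Fin n))))) ↔
      (n = 3 ∨ (n = 4 ∧ i = 1))) ∧
    (∀ w : Equiv.Perm (Fin n),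
      IsDominant (dotAct w (-(3 • posRoot (⟨i, by omega⟩ : Fin n) (⟨i + 1, hi⟩ : Fin n)))) →
        ((n = 3 ∧ i = 0 ∧
            dotAct w (-(3 • posRoot (⟨i, by omega⟩ : Fin n) (⟨i + 1, hi⟩ : Fin n))) =
              (fun k : Fin n => if (k : ℕ) = 0 then 2 else -1) ∧
            weylLen w = 2) ∨
          (n = 3 ∧ i = 1 ∧
            dotAct w (-(3 • posRoot (⟨i, by omega⟩ : Fin n) (⟨i + 1, hi⟩ : Fin n))) =
              (fun k : Fin n => if (k : ℕ) = 2 then -2 else 1) ∧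
            weylLen w = 2) ∨
          (n = 4 ∧ i = 1 ∧
            dotAct w (-(3 • posRoot (⟨i, by omega⟩ : Fin n) (⟨i + 1, hi⟩ : Fin n))) =
              (fun k : Fin n => if (k : ℕ) ≤ 1 then 1 else -1) ∧
            weylLen w = 3))) := by
  by_cases h34 : n = 3 ∨ (n = 4 ∧ i = 1)
  · rcases h34 with h3 | ⟨h4, hi1⟩
    · subst h3
      have h01 : i = 0 ∨ i = 1 := by omega
      rcases h01 with rfl | rfl
      · refine ⟨?_, ?_⟩
        · show (∃ w : Equiv.Perm (Fin 3), IsDominant (dotAct w (-(3 • posRoot (0 : Fin 3) (1 : Fin 3))))) ↔ (3 = 3 ∨ (3 = 4 ∧ 0 = 1))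
          decide
        · show ∀ w : Equiv.Perm (Fin 3), IsDominant (dotAct w (-(3 • posRoot (0 : Fin 3) (1 : Fin 3)))) → ((3 = 3 ∧ 0 = 0 ∧ dotAct w (-(3 • posRoot (0 : Fin 3) (1 : Fin 3))) = (fun k : Fin 3 => if (k : ℕ) = 0 then 2 else -1) ∧ weylLen w = 2) ∨ (3 = 3 ∧ 0 = 1 ∧ dotAct w (-(3 • posRoot (0 : Fin 3) (1 : Fin 3))) = (fun k : Fin 3 => if (k : ℕ) = 2 then -2 else 1) ∧ weylLen w = 2) ∨ (3 = 4 ∧ 0 = 1 ∧ dotAct w (-(3 • posRoot (0 : Fin 3) (1 : Fin 3))) = (fun k : Fin 3 => if (k : ℕ) ≤ 1 then 1 else -1) ∧ weylLen w = 3))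
          decide
      · refine ⟨?_, ?_⟩
        · show (∃ w : Equiv.Perm (Fin 3), IsDominant (dotAct w (-(3 • posRoot (1 : Fin 3) (2 : Fin 3))))) ↔ (3 = 3 ∨ (3 = 4 ∧ 1 = 1))
          decide
        · show ∀ w : Equiv.Perm (Fin 3), IsDominant (dotAct w (-(3 • posRoot (1 : Fin 3) (2 : Fin 3)))) → ((3 = 3 ∧ 1 = 0 ∧ dotAct w (-(3 • posRoot (1 : Fin 3) (2 : Fin 3))) = (fun k : Fin 3 => if (k : ℕ) = 0 then 2 else -1) ∧ weylLen w = 2) ∨ (3 = 3 ∧ 1 = 1 ∧ dotAct w (-(3 • posRoot (1 : Fin 3) (2 : Fin 3))) = (fun k : Fin 3 => if (k : ℕ) = 2 then -2 else 1) ∧ weylLen w = 2) ∨ (3 = 4 ∧ 1 = 1 ∧ dotAct w (-(3 • posRoot (1 : Fin 3) (2 : Fin 3))) = (fun k : Fin 3 => if (k : ℕ) ≤ 1 then 1 else -1) ∧ weylLen w = 3))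
          decide
    · subst h4; subst hi1
      refine ⟨?_, ?_⟩
      · show (∃ w : Equiv.Perm (Fin 4), IsDominant (dotAct w (-(3 • posRoot (1 : Fin 4) (2 : Fin 4))))) ↔ (4 = 3 ∨ (4 = 4 ∧ 1 = 1))
        decide
      · show ∀ w : Equiv.Perm (Fin 4), IsDominant (dotAct w (-(3 • posRoot (1 : Fin 4) (2 : Fin 4)))) → ((4 = 3 ∧ 1 = 0 ∧ dotAct w (-(3 • posRoot (1 : Fin 4) (2 : Fin 4))) = (fun k : Fin 4 => if (k : ℕ) = 0 then 2 else -1) ∧ weylLen w = 2) ∨ (4 = 3 ∧ 1 = 1 ∧ dotAct w (-(3 • posRoot (1 : Fin 4) (2 : Fin 4))) = (fun k : Fin 4 => if (k : ℕ) = 2 then -2 else 1) ∧ weylLen w = 2) ∨ (4 = 4 ∧ 1 = 1 ∧ dotAct w (-(3 • posRoot (1 : Fin 4) (2 : Fin 4))) = (fun k : Fin 4 => if (k : ℕ) ≤ 1 then 1 else -1) ∧ weylLen w = 3))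
        decide
  · push_neg at h34
    obtain ⟨hn3, hn4⟩ := h34
    have hcase : 2 ≤ i ∨ i + 3 < n := by
      rcases eq_or_ne n 4 with h4 | h4
      · have := hn4 h4; omega
      · omega
    set p : Fin n := ⟨i, by omega⟩ with hp
    set q : Fin n := ⟨i + 1, hi⟩ with hq
    have hcoll : ∃ a b : Fin n, a ≠ b ∧
        (-(3 • posRoot p q)) a + weylRho n a = (-(3 • posRoot p q)) b + weylRho n b := by
      rcases hcase with h2 | h3
      · refine ⟨⟨i + 1, hi⟩, ⟨i - 2, by omega⟩, ?_, ?_⟩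
        · intro h
          simp only [Fin.mk.injEq] at h
          omega
        · rw [lam_val, lam_val]
          have e1 : (⟨i + 1, hi⟩ : Fin n) = q := rfl
          have e2 : (⟨i + 1, hi⟩ : Fin n) ≠ p := by
            simp only [hp, ne_eq, Fin.mk.injEq]; omega
          have e3 : (⟨i - 2, by omega⟩ : Fin n) ≠ q := by
            simp only [hq, ne_eq, Fin.mk.injEq]; omega
          have e4 : (⟨i - 2, by omega⟩ : Fin n) ≠ p := by
            simp only [hp, ne_eq, Fin.mk.injEq]; omega
          rw [if_pos e1, if_neg e2, if_neg e3, if_neg e4]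
          simp only [weylRho, Fin.val_mk]
          push_cast
          omega
      · refine ⟨⟨i, by omega⟩, ⟨i + 3, by omega⟩, ?_, ?_⟩
        · intro h
          simp only [Fin.mk.injEq] at h
          omega
        · rw [lam_val, lam_val]
          have e1 : (⟨i, by omega⟩ : Fin n) = p := rfl
          have e2 : (⟨i, by omega⟩ : Fin n) ≠ q := by
            simp only [hq, ne_eq, Fin.mk.injEq]; omega
          have e3 : (⟨i + 3, by omega⟩ : Fin n) ≠ q := by
            simp only [hq, ne_eq, Fin.mk.injEq]; omega
          have e4 : (⟨i + 3, by omega⟩ : Fin n) ≠ p := by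
            simp only [hp, ne_eq, Fin.mk.injEq]; omega
          rw [if_neg e2, if_pos e1, if_neg e3, if_neg e4]
          simp only [weylRho, Fin.val_mk]
          push_cast
          omega
    obtain ⟨a, b, hab, hsum⟩ := hcoll
    constructor
    · constructor
      · rintro ⟨w, hw⟩
        exact absurd hw (no_dom _ a b hab hsum w)
      · rintro (h | ⟨h, h'⟩)
        · exact absurd h hn3
        · exact absurd h' (hn4 h)
    · intro w hw
      exact absurd hw (no_dom _ a b hab hsum w)
end

section
/- Let n ≥ 6 and let α, β, γ be three pairwise distinct positive roots of A_{n−1}. If w ∈ S_n is such that w·(−2α−β−γ) = w(−2α−β−γ+ρ) − ρ is dominant, then w·(−2α−β−γ) = 0. -/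
/-- Core combinatorial fact: the head-weight at `p` cannot reach `n - p` while
the tail-weight at `q` reaches `q + 1`. -/
lemma coreAux (n a1 a2 b1 b2 c1 c2 p q : ℕ) (hn : 6 ≤ n)
    (ha : a1 < a2) (hb : b1 < b2) (hc : c1 < c2)
    (ha2 : a2 < n) (hb2 : b2 < n) (hc2 : c2 < n) (hp : p < n)
    (hbc : ¬(b1 = c1 ∧ b2 = c2))
    (h1 : (n : ℤ) - p ≤ 2*(if p = a1 then (1:ℤ) else 0) + (if p = b1 then (1:ℤ) else 0) + (if p = c1 then (1:ℤ) else 0))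
    (h2 : (q:ℤ) + 1 ≤ 2*(if q = a2 then (1:ℤ) else 0) + (if q = b2 then (1:ℤ) else 0) + (if q = c2 then (1:ℤ) else 0)) :
    False := by
  split_ifs at h1 h2 <;> omega

/-- For n ≥ 6 and pairwise distinct positive roots α, β, γ of A_{n−1},
if w·(−2α−β−γ) is dominant then it is zero. -/
theorem dot_neg_2a_b_c_dominant_eq_zero (n : ℕ) (hn : 6 ≤ n) (α β γ : Fin n → ℤ)
    (hα : IsPosRoot α) (hβ : IsPosRoot β) (hγ : IsPosRoot γ)
    (hab : α ≠ β) (hac : α ≠ γ) (hbc : β ≠ γ) (w : Equiv.Perm (Fin n))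
    (hdom : IsDominant (dotAct w (-(2 • α) - β - γ))) :
    dotAct w (-(2 • α) - β - γ) = 0 := by
  obtain ⟨a1, a2, ha, rfl⟩ := hα
  obtain ⟨b1, b2, hb, rfl⟩ := hβ
  obtain ⟨c1, c2, hc, rfl⟩ := hγ
  have hbc' : ¬(((b1:ℕ) = (c1:ℕ)) ∧ ((b2:ℕ) = (c2:ℕ))) := by
    rintro ⟨h1, h2⟩
    exact hbc (by rw [Fin.val_injective h1, Fin.val_injective h2])
  set f : Fin n → ℤ :=
    fun k => (-(2 • posRoot a1 a2) - posRoot b1 b2 - posRoot c1 c2) k + weylRho n k with hf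
  have hfk : ∀ k : Fin n, f k = (n:ℤ) - 1 - (k:ℕ)
      - (2*((if (k:ℕ) = (a1:ℕ) then (1:ℤ) else 0) - (if (k:ℕ) = (a2:ℕ) then (1:ℤ) else 0))
        + ((if (k:ℕ) = (b1:ℕ) then (1:ℤ) else 0) - (if (k:ℕ) = (b2:ℕ) then (1:ℤ) else 0))
        + ((if (k:ℕ) = (c1:ℕ) then (1:ℤ) else 0) - (if (k:ℕ) = (c2:ℕ) then (1:ℤ) else 0))) := by
    intro k
    simp only [hf, two_smul, Pi.sub_apply, Pi.neg_apply, Pi.add_apply,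
      posRoot, weylRho, Fin.ext_iff]
    ring
  have hdot : dotAct w (-(2 • posRoot a1 a2) - posRoot b1 b2 - posRoot c1 c2)
      = fun i => f (w⁻¹ i) - weylRho n i := rfl
  rw [hdot] at hdom ⊢
  -- the sum of all entries is zero
  have hind : ∀ d : Fin n, ∑ k : Fin n, (if (k:ℕ) = (d:ℕ) then (1:ℤ) else 0) = 1 := by
    intro d
    rw [Finset.sum_eq_single d]
    · simp
    · intro k _ hk
      simp [Fin.val_eq_val, hk]
    · simp
  have hsum0 : ∑ k : Fin n, (f k - weylRho n k) = 0 := by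
    have hpt : ∀ k : Fin n, f k - weylRho n k =
        (-2) * (if (k:ℕ)=(a1:ℕ) then (1:ℤ) else 0) + 2 * (if (k:ℕ)=(a2:ℕ) then (1:ℤ) else 0)
        + (-1) * (if (k:ℕ)=(b1:ℕ) then (1:ℤ) else 0) + 1 * (if (k:ℕ)=(b2:ℕ) then (1:ℤ) else 0)
        + (-1) * (if (k:ℕ)=(c1:ℕ) then (1:ℤ) else 0) + 1 * (if (k:ℕ)=(c2:ℕ) then (1:ℤ) else 0) := by
      intro k
      rw [hfk]
      simp only [weylRho]
      ring
    rw [Finset.sum_congr rfl fun k _ => hpt k]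
    simp only [Finset.sum_add_distrib, ← Finset.mul_sum, hind]
    ring
  have hsum : ∑ i : Fin n, (f (w⁻¹ i) - weylRho n i) = 0 := by
    rw [Finset.sum_sub_distrib, Equiv.sum_comp (w⁻¹ : Equiv.Perm (Fin n)) f,
      ← Finset.sum_sub_distrib, hsum0]
  have hn0 : 0 < n := by omega
  have key : ∀ i : Fin n, f (w⁻¹ i) - weylRho n i = 0 := by
    by_cases hup : ∀ k : Fin n, f k ≤ (n:ℤ) - 1
    · -- all entries ≤ n-1 : every coordinate of the dominant weight is ≤ 0
      have h0le : ∀ i : Fin n, f (w⁻¹ i) - weylRho n i ≤ 0 := by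
        intro i
        have h1 := hdom ⟨0, hn0⟩ i (Fin.le_def.mpr (by simp))
        have h2 := hup (w⁻¹ (⟨0, hn0⟩ : Fin n))
        have h3 : weylRho n (⟨0, hn0⟩ : Fin n) = (n:ℤ) - 1 := by simp [weylRho]
        simp only at h1
        rw [h3] at h1
        linarith
      intro i
      exact (Finset.sum_eq_zero_iff_of_nonpos (fun i _ => h0le i)).mp hsum i (Finset.mem_univ i)
    · -- some entry > n-1 : then all entries are ≥ 0
      push_neg at hup
      obtain ⟨q, hq⟩ := hup
      have hlow : ∀ k : Fin n, 0 ≤ f k := by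
        intro p
        by_contra hk
        push_neg at hk
        refine coreAux n a1 a2 b1 b2 c1 c2 p q hn ha hb hc a2.isLt b2.isLt c2.isLt p.isLt hbc' ?_ ?_
        · rw [hfk] at hk
          split_ifs at hk ⊢ <;> omega
        · rw [hfk] at hq
          split_ifs at hq ⊢ <;> omega
      have h0ge : ∀ i : Fin n, 0 ≤ f (w⁻¹ i) - weylRho n i := by
        intro i
        have hlt : n - 1 < n := by omega
        have h1 := hdom i ⟨n-1, hlt⟩ (Fin.le_def.mpr (by have := i.isLt; simp; omega))
        have h2 := hlow (w⁻¹ (⟨n-1, hlt⟩ : Fin n))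
        have h3 : weylRho n (⟨n-1, hlt⟩ : Fin n) = 0 := by
          simp only [weylRho]
          push_cast [Nat.cast_sub (by omega : 1 ≤ n)]
          ring
        simp only at h1
        rw [h3] at h1
        linarith
      intro i
      exact (Finset.sum_eq_zero_iff_of_nonneg (fun i _ => h0ge i)).mp hsum i (Finset.mem_univ i)
  funext i
  exact key i
end

section
/- Let n ≥ 6 and let α be a positive root of A_{n−1}. If w ∈ S_n is such that w·(−4α) = w(−4α+ρ) − ρ is dominant and nonzero, then n = 6, α = α_3 = e_3 − e_4, w·(−4α_3) = α_1+2α_2+3α_3+2α_4+α_5 = (1,1,1,−1,−1,−1), and ℓ(w) = 5. -/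
set_option maxRecDepth 10000

/-- Auxiliary: a permutation of `Fin 6` used in the surviving case. -/
def dnfrcSig : Equiv.Perm (Fin 6) := ⟨![3,0,1,4,5,2], ![1,2,5,0,3,4], by decide, by decide⟩

/-- Auxiliary chain lemma: if successive steps drop by at least 1, differences accumulate. -/
lemma dnfrc_chain {n : ℕ} (g : Fin n → ℤ)
    (hstep : ∀ (m : ℕ) (h : m + 1 < n), g ⟨m+1, h⟩ + 1 ≤ g ⟨m, Nat.lt_of_succ_lt h⟩) :
    ∀ (m : ℕ) (hm : m < n) (k : Fin n), (k : ℕ) ≤ m →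
      g ⟨m, hm⟩ + ((m : ℤ) - (k : ℕ)) ≤ g k := by
  intro m
  induction m with
  | zero =>
    intro hm k hk
    have hk0 : k = ⟨0, hm⟩ := Fin.ext (by simp only [Fin.val_mk]; omega)
    subst hk0
    simp
  | succ m ih =>
    intro hm k hk
    rcases Nat.lt_or_ge (k : ℕ) (m + 1) with h | h
    · have h1 := hstep m hm
      have h2 := ih (Nat.lt_of_succ_lt hm) k (by omega)
      push_cast
      push_cast at h2
      linarith
    · have hk0 : k = ⟨m+1, hm⟩ := Fin.ext (by simp only [Fin.val_mk]; omega)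
      subst hk0
      simp

/-- For n ≥ 6 and a positive root α of A_{n−1}: if w·(−4α) is dominant and nonzero,
then n = 6, α = α₃ = e₃ − e₄, w·(−4α₃) = (1,1,1,−1,−1,−1), and ℓ(w) = 5. -/
theorem dot_neg_four_root_classification (n : ℕ) (hn : 6 ≤ n) (α : Fin n → ℤ)
    (hα : IsPosRoot α) (w : Equiv.Perm (Fin n))
    (hdom : IsDominant (dotAct w (-(4 • α))))
    (hnz : dotAct w (-(4 • α)) ≠ 0) :
    n = 6 ∧ α = posRoot (⟨2, by omega⟩ : Fin n) (⟨3, by omega⟩ : Fin n) ∧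
    dotAct w (-(4 • α)) = (fun k : Fin n => if (k : ℕ) ≤ 2 then 1 else -1) ∧
    weylLen w = 5 := by
  obtain ⟨i, j, hij, hαeq⟩ := hα
  subst hαeq
  have hij' : (i : ℕ) < (j : ℕ) := hij
  have hijne : i ≠ j := Fin.ne_of_lt hij
  have hjn : (j : ℕ) < n := j.isLt
  have hin : (i : ℕ) < n := i.isLt
  set σ : Equiv.Perm (Fin n) := w⁻¹ with hσ
  set ν : Fin n → ℤ := fun k => (-(4 • posRoot i j)) k + weylRho n k with hν
  have hνval : ∀ k : Fin n, ν k =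
      ((n : ℤ) - 1 - (k : ℕ)) - 4 * ((if k = i then 1 else 0) - (if k = j then 1 else 0)) := by
    intro k
    simp only [hν, posRoot, weylRho, Pi.neg_apply, Pi.smul_apply, smul_eq_mul]
    ring
  have hstep : ∀ (m : ℕ) (h : m + 1 < n),
      ν (σ ⟨m+1, h⟩) + 1 ≤ ν (σ ⟨m, Nat.lt_of_succ_lt h⟩) := by
    intro m h
    have hd := hdom ⟨m, Nat.lt_of_succ_lt h⟩ ⟨m+1, h⟩ (by simp [Fin.le_def])
    simp only [dotAct, weylRho, Fin.val_mk] at hd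
    rw [← hσ] at hd
    simp only [hν, weylRho]
    push_cast at hd ⊢
    linarith
  have hmono : ∀ k l : Fin n, (k : ℕ) < (l : ℕ) → ν (σ l) < ν (σ k) := by
    intro k l hkl
    have h := dnfrc_chain (fun t => ν (σ t)) hstep (l : ℕ) l.isLt k (le_of_lt hkl)
    simp only [Fin.eta] at h
    have hcast : ((k : ℕ) : ℤ) < ((l : ℕ) : ℤ) := by exact_mod_cast hkl
    linarith
  have hinj : Function.Injective ν := by
    intro a b hab
    by_contra hne
    have hne' : σ.symm a ≠ σ.symm b := fun h => hne (by
      have := congrArg σ h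
      simpa using this)
    rcases Nat.lt_trichotomy ((σ.symm a : Fin n) : ℕ) ((σ.symm b : Fin n) : ℕ) with h | h | h
    · have h2 := hmono _ _ h
      rw [Equiv.apply_symm_apply, Equiv.apply_symm_apply] at h2
      exact h2.ne hab.symm
    · exact hne' (Fin.ext h)
    · have h2 := hmono _ _ h
      rw [Equiv.apply_symm_apply, Equiv.apply_symm_apply] at h2
      exact h2.ne hab
  have hc1 : (i : ℕ) + 4 = (j : ℕ) ∨ n ≤ (i : ℕ) + 4 := by
    by_contra hcon
    push_neg at hcon
    obtain ⟨h1, h2⟩ := hcon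
    have h2' : (i : ℕ) + 4 < n := by omega
    have hki : (⟨(i : ℕ) + 4, h2'⟩ : Fin n) ≠ i := by
      simp only [Fin.ne_iff_vne, Fin.val_mk]; omega
    have hkj : (⟨(i : ℕ) + 4, h2'⟩ : Fin n) ≠ j := by
      simp only [Fin.ne_iff_vne, Fin.val_mk]; omega
    have heq : ν (⟨(i : ℕ) + 4, h2'⟩ : Fin n) = ν i := by
      rw [hνval, hνval, if_neg hki, if_neg hkj, if_pos rfl, if_neg hijne]
      simp only [Fin.val_mk]
      push_cast
      ring
    exact hki (hinj heq)
  have hc2 : (i : ℕ) + 4 = (j : ℕ) ∨ (j : ℕ) < 4 := by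
    by_contra hcon
    push_neg at hcon
    obtain ⟨h1, h2⟩ := hcon
    have h2' : (j : ℕ) - 4 < n := by omega
    have hki : (⟨(j : ℕ) - 4, h2'⟩ : Fin n) ≠ i := by
      simp only [Fin.ne_iff_vne, Fin.val_mk]; omega
    have hkj : (⟨(j : ℕ) - 4, h2'⟩ : Fin n) ≠ j := by
      simp only [Fin.ne_iff_vne, Fin.val_mk]; omega
    have heq : ν (⟨(j : ℕ) - 4, h2'⟩ : Fin n) = ν j := by
      rw [hνval, hνval, if_neg hki, if_neg hkj, if_pos rfl, if_neg (Ne.symm hijne)]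
      simp only [Fin.val_mk]
      have : (((j : ℕ) - 4 : ℕ) : ℤ) = ((j : ℕ) : ℤ) - 4 := by omega
      rw [this]
      ring
    exact hkj (hinj heq)
  by_cases hc : (i : ℕ) + 4 = (j : ℕ)
  · -- excluded case: the dot image is 0
    exfalso
    have hub : ∀ t, ν t ≤ (n : ℤ) - 1 := by
      intro t
      rw [hνval]
      by_cases h1 : t = i
      · subst h1; rw [if_pos rfl, if_neg hijne]; omega
      · by_cases h2 : t = j
        · subst h2; rw [if_neg (Ne.symm hijne), if_pos rfl]; omega
        · rw [if_neg h1, if_neg h2]; omega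
    have hlb : ∀ t, 0 ≤ ν t := by
      intro t
      rw [hνval]
      by_cases h1 : t = i
      · subst h1; rw [if_pos rfl, if_neg hijne]; omega
      · by_cases h2 : t = j
        · subst h2; rw [if_neg (Ne.symm hijne), if_pos rfl]; omega
        · rw [if_neg h1, if_neg h2]
          have := t.isLt
          omega
    have h0 : 0 < n := by omega
    have hlast : n - 1 < n := by omega
    have hall : ∀ k : Fin n, ν (σ k) = (n : ℤ) - 1 - (k : ℕ) := by
      intro k
      have hupper := dnfrc_chain (fun t => ν (σ t)) hstep (k : ℕ) k.isLt ⟨0, h0⟩ (by simp)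
      have hlower := dnfrc_chain (fun t => ν (σ t)) hstep (n - 1) hlast k (by omega)
      simp only [Fin.eta, Fin.val_mk, Nat.cast_zero] at hupper hlower
      have h1 := hub (σ ⟨0, h0⟩)
      have h2 := hlb (σ ⟨n - 1, hlast⟩)
      have h3 := k.isLt
      omega
    apply hnz
    funext k
    have hk := hall k
    simp only [dotAct, Pi.zero_apply]
    rw [← hσ]
    have h2 : (-(4 • posRoot i j)) (σ k) + weylRho n (σ k) = ν (σ k) := by rw [hν]
    have h3 : weylRho n k = (n : ℤ) - 1 - (k : ℕ) := rfl
    linarith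
  · -- surviving case
    have hni : n ≤ (i : ℕ) + 4 := hc1.resolve_left hc
    have hj4 : (j : ℕ) < 4 := hc2.resolve_left hc
    have hn6 : n = 6 := by omega
    subst hn6
    have hi2 : i = ⟨2, by norm_num⟩ := Fin.ext (by simp only [Fin.val_mk]; omega)
    have hj3 : j = ⟨3, by norm_num⟩ := Fin.ext (by simp only [Fin.val_mk]; omega)
    subst hi2
    subst hj3
    have hν0 : ν = ![5, 4, -1, 6, 1, 0] := by rw [hν]; decide
    have h5 : ∀ m : Fin 5, (![5, 4, -1, 6, 1, 0] : Fin 6 → ℤ) (σ m.succ) + 1 ≤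
        (![5, 4, -1, 6, 1, 0] : Fin 6 → ℤ) (σ m.castSucc) := by
      intro m
      have h := hstep (m : ℕ) (by omega)
      rw [hν0] at h
      exact h
    have huniq : ∀ τ : Equiv.Perm (Fin 6),
        (∀ m : Fin 5, (![5, 4, -1, 6, 1, 0] : Fin 6 → ℤ) (τ m.succ) + 1 ≤
          (![5, 4, -1, 6, 1, 0] : Fin 6 → ℤ) (τ m.castSucc)) → τ = dnfrcSig := by decide
    have hσ0 : σ = dnfrcSig := huniq σ h5
    have hw : w = dnfrcSig⁻¹ := by rw [← inv_inv w, ← hσ, hσ0]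
    subst hw
    exact ⟨rfl, rfl, by decide, by decide⟩
end

section
/- With the B_2 root data in ℚ², let α, β ∈ Φ⁺ = {(0,1), (1,−1), (1,0), (1,1)} (possibly equal) and let w be a signed permutation of ℚ² such that μ = w·(−α−β) = w(−α−β+ρ) − ρ is dominant. Then μ ∈ {(0,0), (1,0)}. Moreover, μ = (1,0) = α_1+α_2 occurs if and only if α = β = α_2 = (1,−1) and w is the linear map (x,y) ↦ (y,−x); this w satisfies ℓ(w) = 2, so the pair (−2α_2, w) is the unique pair producing the dominant weight α_1+α_2. -/
/-!
A signed permutation only permutes the absolute values of the coordinates, and `μ + ρ = w(ρ - α - β)`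
has positive coordinates when `μ` is dominant. Hence `μ + ρ` is one of the two orderings of
`(|ν₁|, |ν₂|)` with `ν = ρ - α - β`, and running through the sixteen pairs of positive roots leaves
only `μ = 0` and, for `α = β = α₂`, `μ = α₁ + α₂`. In that last case `w` must send `(-1/2, 5/2)` to
`(5/2, 1/2)`, which pins it down as the rotation `(x, y) ↦ (y, -x)`.
-/

/-- The positive roots of B₂ realized in ℚ². -/
def B2PosRoots : Finset (ℚ × ℚ) := {(0, 1), (1, -1), (1, 0), (1, 1)}

/-- ρ = (3/2, 1/2) for B₂. -/
def B2rho : ℚ × ℚ := (3 / 2, 1 / 2)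

/-- The dot action w·λ = w(λ+ρ) − ρ. -/
def B2dot (w : ℚ × ℚ → ℚ × ℚ) (lam : ℚ × ℚ) : ℚ × ℚ := w (lam + B2rho) - B2rho

/-- λ is dominant iff λ₁ ≥ λ₂ ≥ 0. -/
def B2IsDominant (lam : ℚ × ℚ) : Prop := lam.2 ≤ lam.1 ∧ 0 ≤ lam.2

/-- ℓ(w) = #{γ ∈ Φ⁺ : w(γ) ∈ −Φ⁺}. -/
def B2len (w : ℚ × ℚ → ℚ × ℚ) : ℕ :=
  (B2PosRoots.filter fun γ => -(w γ) ∈ B2PosRoots).card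

/-- The Weyl group of B₂: the 8 signed permutations of the two coordinates of ℚ². -/
def IsSignedPerm (w : ℚ × ℚ → ℚ × ℚ) : Prop :=
  ∃ (s : Bool) (e1 e2 : ℚ), (e1 = 1 ∨ e1 = -1) ∧ (e2 = 1 ∨ e2 = -1) ∧
    ∀ v : ℚ × ℚ, w v = if s then (e1 * v.2, e2 * v.1) else (e1 * v.1, e2 * v.2)

theorem IsSignedPerm.abs_apply {w : ℚ × ℚ → ℚ × ℚ} (hw : IsSignedPerm w) (v : ℚ × ℚ) :
    (|(w v).1| = |v.1| ∧ |(w v).2| = |v.2|) ∨ (|(w v).1| = |v.2| ∧ |(w v).2| = |v.1|) := by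
  obtain ⟨s, e1, e2, he1, he2, hwv⟩ := hw
  have habs1 : |e1| = 1 := by rcases he1 with rfl | rfl <;> norm_num
  have habs2 : |e2| = 1 := by rcases he2 with rfl | rfl <;> norm_num
  cases s <;> simp [hwv, abs_mul, habs1, habs2]

theorem IsSignedPerm.dot_add_rho_eq_of_dominant {w : ℚ × ℚ → ℚ × ℚ} (hw : IsSignedPerm w)
    {lam : ℚ × ℚ} (hdom : B2IsDominant (B2dot w lam)) :
    B2dot w lam + B2rho = (|(lam + B2rho).1|, |(lam + B2rho).2|) ∨
      B2dot w lam + B2rho = (|(lam + B2rho).2|, |(lam + B2rho).1|) := by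
  set u := w (lam + B2rho)
  have hdot : B2dot w lam = u - B2rho := rfl
  obtain ⟨h21, h2⟩ := hdom
  simp only [hdot, B2rho, Prod.fst_sub, Prod.snd_sub] at h21 h2
  have hpos2 : 0 < u.2 := by linarith
  have hpos1 : 0 < u.1 := by linarith
  rw [hdot, sub_add_cancel]
  rcases hw.abs_apply (lam + B2rho) with ⟨h1, h2⟩ | ⟨h1, h2⟩
  · left; rw [← h1, ← h2, abs_of_pos hpos1, abs_of_pos hpos2]
  · right; rw [← h1, ← h2, abs_of_pos hpos1, abs_of_pos hpos2]

theorem B2IsDominant.eq_zero_or_eq_of_neg_two_roots {μ : ℚ × ℚ} (hdom : B2IsDominant μ)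
    {α β : ℚ × ℚ} (hα : α ∈ B2PosRoots) (hβ : β ∈ B2PosRoots)
    (hμ : μ + B2rho = (|(-α - β + B2rho).1|, |(-α - β + B2rho).2|) ∨
      μ + B2rho = (|(-α - β + B2rho).2|, |(-α - β + B2rho).1|)) :
    μ = (0, 0) ∨ (μ = (1, 0) ∧ α = (1, -1) ∧ β = (1, -1)) := by
  obtain ⟨a, b⟩ := μ
  obtain ⟨hba, hb⟩ : b ≤ a ∧ 0 ≤ b := hdom
  simp only [B2PosRoots, Finset.mem_insert, Finset.mem_singleton] at hα hβ
  simp only [B2rho, Prod.mk_add_mk, Prod.mk.injEq] at hμ ⊢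
  -- Only `α + β ∈ {(1, 2), (2, -1), (2, 2)}` (giving `μ = 0`) and `α + β = (2, -2)` (giving
  -- `μ = (1, 0)`) survive; every other case yields `μ₂ < 0` or `μ₁ < μ₂`.
  rcases hμ with ⟨ha, hb'⟩ | ⟨ha, hb'⟩ <;>
    rcases hα with rfl | rfl | rfl | rfl <;> rcases hβ with rfl | rfl | rfl | rfl <;>
    norm_num at ha hb' <;>
    first
      | (exfalso; linarith)
      | (left; exact ⟨by linarith, by linarith⟩)
      | (right; exact ⟨⟨by linarith, by linarith⟩, rfl, rfl⟩)

theorem IsSignedPerm.eq_rotation_of_apply {w : ℚ × ℚ → ℚ × ℚ} (hw : IsSignedPerm w)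
    (h : w (-1 / 2, 5 / 2) = (5 / 2, 1 / 2)) (v : ℚ × ℚ) : w v = (v.2, -v.1) := by
  obtain ⟨s, e1, e2, he1, he2, hwv⟩ := hw
  rw [hwv, Prod.ext_iff] at h
  rw [hwv]
  cases s <;> rcases he1 with rfl | rfl <;> rcases he2 with rfl | rfl <;>
    norm_num at h
  norm_num

theorem B2len_rotation : B2len (fun v => (v.2, -v.1)) = 2 := by
  norm_num [B2len, B2PosRoots, Finset.filter_insert, Finset.filter_singleton]

/-- In type B₂, for positive roots α, β (possibly equal) and a signed permutation w with
μ = w·(−α−β) dominant: μ ∈ {(0,0), (1,0)}; moreover μ = (1,0) = α₁+α₂ iff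
α = β = α₂ = (1,−1) and w is (x,y) ↦ (y,−x), and in that case ℓ(w) = 2. -/
theorem B2_dot_neg_two_roots_classification (α β : ℚ × ℚ)
    (hα : α ∈ B2PosRoots) (hβ : β ∈ B2PosRoots)
    (w : ℚ × ℚ → ℚ × ℚ) (hw : IsSignedPerm w)
    (hdom : B2IsDominant (B2dot w (-α - β))) :
    (B2dot w (-α - β) = (0, 0) ∨ B2dot w (-α - β) = (1, 0)) ∧
    (B2dot w (-α - β) = (1, 0) ↔
      (α = (1, -1) ∧ β = (1, -1) ∧ ∀ v : ℚ × ℚ, w v = (v.2, -v.1))) ∧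
    (B2dot w (-α - β) = (1, 0) → B2len w = 2) := by
  have hμ := hdom.eq_zero_or_eq_of_neg_two_roots hα hβ
    (hw.dot_add_rho_eq_of_dominant hdom)
  have hunique : B2dot w (-α - β) = (1, 0) →
      α = (1, -1) ∧ β = (1, -1) ∧ ∀ v : ℚ × ℚ, w v = (v.2, -v.1) := by
    intro h
    obtain ⟨-, rfl, rfl⟩ := hμ.resolve_left (by rw [h]; simp)
    refine ⟨rfl, rfl, hw.eq_rotation_of_apply ?_⟩
    have hshift : w (-(1, -1) - (1, -1) + B2rho) = (1, 0) + B2rho := by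
      rw [← h]; exact (sub_add_cancel _ _).symm
    norm_num [B2rho] at hshift ⊢
    exact hshift
  refine ⟨hμ.imp_right fun h => h.1, ⟨hunique, ?_⟩, fun h => ?_⟩
  · rintro ⟨rfl, rfl, hwv⟩
    norm_num [B2dot, hwv, B2rho]
  · rw [show w = fun v => (v.2, -v.1) from funext (hunique h).2.2]
    exact B2len_rotation
end
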